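/- If M is a Gorenstein flat left R-module, then Tor^R_i(I, M) = 0 for every injective right R-module I and all i > 0, and there exists an exact sequence 0 → M → F₀ → F₁ → ... of left R-modules with each Fᵢ flat that remains exact after applying I ⊗_R − for every injective right R-module I; conversely, these two conditions imply that M is Gorenstein flat. -/

import Mathlib

open TensorProduct

universe u

section NCTensor
variable (R : Type u) [Ring R]

/-- Generators of the defect submodule used to define the tensor product of a right
`R`-module `N` and a left `R`-module `M` over a (possibly noncommutative) ring `R`. -/
def NCRel (N M : Type u) [AddCommGroup N] [Module Rᵐᵒᵖ N] [AddCommGroup M] [Module R M] :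
    Submodule ℤ (N ⊗[ℤ] M) :=
  Submodule.span ℤ { t | ∃ (n : N) (r : R) (m : M),
    t = (MulOpposite.op r • n) ⊗ₜ[ℤ] m - n ⊗ₜ[ℤ] (r • m) }

/-- The tensor product `N ⊗_R M` of a right `R`-module and a left `R`-module, as an
abelian group. -/
def NCTensor (N M : Type u) [AddCommGroup N] [Module Rᵐᵒᵖ N] [AddCommGroup M] [Module R M] :
    Type u :=
  (N ⊗[ℤ] M) ⧸ NCRel R N M

noncomputable instance (N M : Type u) [AddCommGroup N] [Module Rᵐᵒᵖ N] [AddCommGroup M] [Module R M] :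
    AddCommGroup (NCTensor R N M) :=
  inferInstanceAs (AddCommGroup ((N ⊗[ℤ] M) ⧸ NCRel R N M))

noncomputable instance (N M : Type u) [AddCommGroup N] [Module Rᵐᵒᵖ N] [AddCommGroup M] [Module R M] :
    Module ℤ (NCTensor R N M) :=
  inferInstanceAs (Module ℤ ((N ⊗[ℤ] M) ⧸ NCRel R N M))

/-- The map `I ⊗_R M → I ⊗_R M'` induced by a map `M →ₗ[R] M'` of left modules. -/
noncomputable def NCmap (N : Type u) [AddCommGroup N] [Module Rᵐᵒᵖ N] {M M' : Type u} [AddCommGroup M]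
    [Module R M] [AddCommGroup M'] [Module R M'] (f : M →ₗ[R] M') :
    NCTensor R N M →ₗ[ℤ] NCTensor R N M' :=
  Submodule.mapQ _ _ (LinearMap.lTensor N (f.restrictScalars ℤ)) <| by
    rw [NCRel, Submodule.span_le]
    rintro t ⟨n, r, m, rfl⟩
    refine Submodule.mem_comap.mpr (Submodule.subset_span ?_)
    refine ⟨n, r, f m, ?_⟩
    change LinearMap.lTensor N (f.restrictScalars ℤ) ((MulOpposite.op r • n) ⊗ₜ[ℤ] m - n ⊗ₜ[ℤ] (r • m)) = _
    simp [LinearMap.lTensor_tmul, map_sub, LinearMap.map_smul]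

/-- The map `N ⊗_R M → N' ⊗_R M` induced by a map `N →ₗ[Rᵐᵒᵖ] N'` of right modules. -/
noncomputable def NCmapL (R : Type u) [Ring R] {N N' : Type u} [AddCommGroup N]
    [Module Rᵐᵒᵖ N] [AddCommGroup N'] [Module Rᵐᵒᵖ N'] (M : Type u) [AddCommGroup M]
    [Module R M] (f : N →ₗ[Rᵐᵒᵖ] N') :
    NCTensor R N M →ₗ[ℤ] NCTensor R N' M :=
  Submodule.mapQ _ _ (LinearMap.rTensor M f.toAddMonoidHom.toIntLinearMap) <| by
    rw [NCRel, Submodule.span_le]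
    rintro t ⟨n, r, m, rfl⟩
    refine Submodule.mem_comap.mpr (Submodule.subset_span ?_)
    refine ⟨f n, r, m, ?_⟩
    change LinearMap.rTensor M f.toAddMonoidHom.toIntLinearMap ((MulOpposite.op r • n) ⊗ₜ[ℤ] m - n ⊗ₜ[ℤ] (r • m)) = _
    simp [LinearMap.rTensor_tmul, map_sub, LinearMap.map_smul]

/-- A left `R`-module `M` (over a possibly noncommutative ring) is flat if tensoring with
`M` preserves injectivity of maps of right `R`-modules. -/
def FlatModule (R : Type u) [Ring R] (M : Type u) [AddCommGroup M] [Module R M] : Prop :=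
  ∀ (N N' : Type u) [AddCommGroup N] [Module Rᵐᵒᵖ N] [AddCommGroup N'] [Module Rᵐᵒᵖ N']
    (f : N →ₗ[Rᵐᵒᵖ] N'), Function.Injective f → Function.Injective (NCmapL R M f)

end NCTensor
section GDefs
variable (R : Type u) [Ring R]

/-- A complete flat resolution witnessing that `M` is a Gorenstein flat left `R`-module:
an exact sequence `⋯ → F₂ → F₁ → F₀ → F₋₁ → ⋯` of flat left `R`-modules with
`M ≅ Im(F₀ → F₋₁)` which stays exact after applying `I ⊗_R -` for every injective right
`R`-module `I`. -/
structure CompleteFlatResolution (M : Type u) [AddCommGroup M] [Module R M] :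
    Type (u + 1) where
  F : ℤ → ModuleCat.{u} R
  d : ∀ z : ℤ, F (z + 1) →ₗ[R] F z
  flat : ∀ z, FlatModule R (F z)
  exact : ∀ z, Function.Exact (d (z + 1)) (d z)
  iso : Nonempty (M ≃ₗ[R] LinearMap.range (d (-1)))
  tensorExact : ∀ (I : Type u) [AddCommGroup I] [Module Rᵐᵒᵖ I], Module.Injective Rᵐᵒᵖ I →
    ∀ z, Function.Exact (NCmap R I (d (z + 1))) (NCmap R I (d z))

/-- A left `R`-module is Gorenstein flat if it admits a complete flat resolution. -/
def IsGorensteinFlat (M : Type u) [AddCommGroup M] [Module R M] : Prop :=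
  Nonempty (CompleteFlatResolution R M)

/-- A complete projective resolution witnessing that `M` is a Gorenstein projective left
`R`-module. -/
structure CompleteProjResolution (M : Type u) [AddCommGroup M] [Module R M] :
    Type (u + 1) where
  P : ℤ → ModuleCat.{u} R
  d : ∀ z : ℤ, P (z + 1) →ₗ[R] P z
  proj : ∀ z, Module.Projective R (P z)
  exact : ∀ z, Function.Exact (d (z + 1)) (d z)
  iso : Nonempty (M ≃ₗ[R] LinearMap.range (d (-1)))
  homExact : ∀ (Q : Type u) [AddCommGroup Q] [Module R Q], Module.Projective R Q →
    ∀ z, Function.Exact (fun g : P z →ₗ[R] Q => g.comp (d z))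
      (fun g : P (z + 1) →ₗ[R] Q => g.comp (d (z + 1)))

/-- A left `R`-module is Gorenstein projective if it admits a complete projective
resolution. -/
def IsGorensteinProjective (M : Type u) [AddCommGroup M] [Module R M] : Prop :=
  Nonempty (CompleteProjResolution R M)

/-- `gfdLE R n M` : the Gorenstein flat dimension of the left `R`-module `M` is at most
`n`, i.e. `M` has a resolution of length `n` by Gorenstein flat modules. -/
def gfdLE : ℕ → ModuleCat.{u} R → Prop
  | 0, M => IsGorensteinFlat R M
  | n + 1, M => ∃ (G : ModuleCat.{u} R) (f : G →ₗ[R] M), Function.Surjective f ∧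
      IsGorensteinFlat R G ∧ gfdLE n (ModuleCat.of R (LinearMap.ker f))

/-- `gpdLE R n M` : the Gorenstein projective dimension of `M` is at most `n`. -/
def gpdLE : ℕ → ModuleCat.{u} R → Prop
  | 0, M => IsGorensteinProjective R M
  | n + 1, M => ∃ (G : ModuleCat.{u} R) (f : G →ₗ[R] M), Function.Surjective f ∧
      IsGorensteinProjective R G ∧ gpdLE n (ModuleCat.of R (LinearMap.ker f))

/-- `fdLE R n M` : the flat dimension of `M` is at most `n`. -/
def fdLE : ℕ → ModuleCat.{u} R → Prop
  | 0, M => FlatModule R M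
  | n + 1, M => ∃ (G : ModuleCat.{u} R) (f : G →ₗ[R] M), Function.Surjective f ∧
      FlatModule R G ∧ fdLE n (ModuleCat.of R (LinearMap.ker f))

/-- `pdLE R n M` : the projective dimension of `M` is at most `n`. -/
def pdLE : ℕ → ModuleCat.{u} R → Prop
  | 0, M => Module.Projective R M
  | n + 1, M => ∃ (G : ModuleCat.{u} R) (f : G →ₗ[R] M), Function.Surjective f ∧
      Module.Projective R G ∧ pdLE n (ModuleCat.of R (LinearMap.ker f))

/-- `idLE R n M` : the injective dimension of `M` is at most `n`. -/
def idLE : ℕ → ModuleCat.{u} R → Prop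
  | 0, M => Module.Injective R M
  | n + 1, M => ∃ (I : ModuleCat.{u} R) (f : M →ₗ[R] I), Function.Injective f ∧
      Module.Injective R I ∧ idLE n (ModuleCat.of R (I ⧸ LinearMap.range f))

/-- Gorenstein flat dimension, valued in `ℕ∞`. -/
noncomputable def gfDim (M : ModuleCat.{u} R) : ℕ∞ :=
  sInf {n : ℕ∞ | ∃ k : ℕ, n = k ∧ gfdLE R k M}

/-- Flat dimension, valued in `ℕ∞`. -/
noncomputable def flatDim (M : ModuleCat.{u} R) : ℕ∞ :=
  sInf {n : ℕ∞ | ∃ k : ℕ, n = k ∧ fdLE R k M}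

/-- Injective dimension, valued in `ℕ∞`. -/
noncomputable def injDim (M : ModuleCat.{u} R) : ℕ∞ :=
  sInf {n : ℕ∞ | ∃ k : ℕ, n = k ∧ idLE R k M}

/-- The (left) weak Gorenstein global dimension of `R`:
the supremum of Gorenstein flat dimensions of all left `R`-modules. -/
noncomputable def wGgldim : ℕ∞ :=
  ⨆ M : ModuleCat.{u} R, gfDim R M

/-- `IFD R` : the supremum of flat dimensions of injective left `R`-modules. -/
noncomputable def IFD : ℕ∞ :=
  ⨆ M : ModuleCat.{u} R, ⨆ (_ : Module.Injective R M), flatDim R M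

/-- A ring is left coherent if every finitely generated left ideal is finitely
presented. -/
def LeftCoherent : Prop :=
  ∀ I : Submodule R R, I.FG → Module.FinitePresentation R I

/-- A ring is right coherent if every finitely generated right ideal is finitely
presented; right ideals are viewed as left ideals of `Rᵐᵒᵖ`. -/
def RightCoherent : Prop := LeftCoherent Rᵐᵒᵖ

end GDefs

/-- `TorVanishGT R n I M` : `Tor_i^R(I, M) = 0` for all `i > n`, expressed by saying that
for every projective resolution `P• → M` of left modules, the complex `I ⊗_R P•` obtained
by tensoring with the right module `I` is exact at every spot of index `> n`. -/
noncomputable def TorVanishGT (R : Type u) [Ring R] (n : ℕ) (I : Type u) [AddCommGroup I]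
    [Module Rᵐᵒᵖ I] (M : ModuleCat.{u} R) : Prop :=
  ∀ (P : ℕ → ModuleCat.{u} R) (d : ∀ i, P (i + 1) →ₗ[R] P i) (ε : P 0 →ₗ[R] M),
    (∀ i, Module.Projective R (P i)) → Function.Surjective ε →
    Function.Exact (d 0) ε → (∀ i, Function.Exact (d (i + 1)) (d i)) →
    ∀ j, n ≤ j → Function.Exact (NCmap R I (d (j + 1))) (NCmap R I (d j))

/-!
A complete flat resolution of `M` splits at `M` into a flat resolution `⋯ → F 1 → F 0 → M → 0`
and a flat coresolution `0 → M → F (-1) → F (-2) → ⋯`, both exact under `I ⊗_R -`. The flat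
resolution computes `Tor(I, M)` by dimension shifting: if `0 → C → G → M → 0` is its first step
and `0 → K → P → M → 0` a projective presentation, a lift of `P → M` along `G → M` yields an exact
sequence `0 → K → C × P → G → 0`. Since `G` is flat it stays exact under `I ⊗_R -`, which gives
injectivity of `I ⊗ K → I ⊗ P`, and it carries the flat resolution of `C` over to one of `K`.
Conversely, splicing a free resolution of `M` with the given coresolution yields a complete flat
resolution, whose free half is exact under `I ⊗_R -` because `Tor(I, M)` vanishes.
-/

namespace NCTensor

variable {R : Type u} [Ring R] {N M : Type u} [AddCommGroup N] [Module Rᵐᵒᵖ N]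
  [AddCommGroup M] [Module R M]

noncomputable def mk (R : Type u) [Ring R] {N M : Type u} [AddCommGroup N] [Module Rᵐᵒᵖ N]
    [AddCommGroup M] [Module R M] (n : N) (m : M) : NCTensor R N M :=
  Submodule.Quotient.mk (n ⊗ₜ[ℤ] m)

lemma mk_add_left (n n' : N) (m : M) : mk R (n + n') m = mk R n m + mk R n' m := by
  rw [mk, add_tmul, Submodule.Quotient.mk_add]
  rfl

lemma mk_add_right (n : N) (m m' : M) : mk R n (m + m') = mk R n m + mk R n m' := by
  rw [mk, tmul_add, Submodule.Quotient.mk_add]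
  rfl

lemma mk_zero_left (m : M) : mk R (0 : N) m = 0 := by
  rw [mk, zero_tmul]
  rfl

lemma mk_zero_right (n : N) : mk R n (0 : M) = 0 := by
  rw [mk, tmul_zero]
  rfl

lemma mk_smul (r : R) (n : N) (m : M) : mk R (MulOpposite.op r • n) m = mk R n (r • m) :=
  (Submodule.Quotient.eq _).2 (Submodule.subset_span ⟨n, r, m, rfl⟩)

@[elab_as_elim]
lemma induction_on {P : NCTensor R N M → Prop} (x : NCTensor R N M) (zero : P 0)
    (mk : ∀ n m, P (mk R n m)) (add : ∀ x y, P x → P y → P (x + y)) : P x := by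
  obtain ⟨y, rfl⟩ := Submodule.Quotient.mk_surjective _ x
  induction y using TensorProduct.induction_on with
  | zero => exact zero
  | tmul n m => exact mk n m
  | add a b ha hb => exact add _ _ ha hb

lemma hom_ext {T : Type*} [AddCommGroup T] {f g : NCTensor R N M →ₗ[ℤ] T}
    (h : ∀ n m, f (mk R n m) = g (mk R n m)) : f = g := by
  ext x
  induction x using induction_on with
  | zero => simp
  | mk n m => exact h n m
  | add a b ha hb => simp [ha, hb]

noncomputable def lift {T : Type u} [AddCommGroup T] (φ : N →+ M →+ T)
    (hφ : ∀ (n : N) (r : R) (m : M), φ (MulOpposite.op r • n) m = φ n (r • m)) :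
    NCTensor R N M →ₗ[ℤ] T :=
  Submodule.liftQ _ (TensorProduct.lift (LinearMap.mk₂ ℤ (fun n m => φ n m) (by simp) (by simp)
      (by simp) (by simp))) <| by
    refine Submodule.span_le.mpr ?_
    rintro t ⟨n, r, m, rfl⟩
    change TensorProduct.lift _ _ = 0
    rw [map_sub, lift.tmul, lift.tmul]
    exact sub_eq_zero.mpr (hφ n r m)

@[simp] lemma lift_mk {T : Type u} [AddCommGroup T] (φ : N →+ M →+ T)
    (hφ : ∀ (n : N) (r : R) (m : M), φ (MulOpposite.op r • n) m = φ n (r • m))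
    (n : N) (m : M) : lift φ hφ (mk R n m) = φ n m :=
  rfl

end NCTensor

section Functoriality

variable {R : Type u} [Ring R]
  {N N' N'' : Type u} [AddCommGroup N] [Module Rᵐᵒᵖ N] [AddCommGroup N'] [Module Rᵐᵒᵖ N']
  [AddCommGroup N''] [Module Rᵐᵒᵖ N'']
  {A B C : Type u} [AddCommGroup A] [Module R A] [AddCommGroup B] [Module R B]
  [AddCommGroup C] [Module R C]

@[simp] lemma NCmap_mk (f : A →ₗ[R] B) (n : N) (a : A) :
    NCmap R N f (NCTensor.mk R n a) = NCTensor.mk R n (f a) :=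
  rfl

@[simp] lemma NCmapL_mk (g : N →ₗ[Rᵐᵒᵖ] N') (n : N) (a : A) :
    NCmapL R A g (NCTensor.mk R n a) = NCTensor.mk R (g n) a :=
  rfl

lemma NCmap_id : NCmap R N (LinearMap.id : A →ₗ[R] A) = LinearMap.id :=
  NCTensor.hom_ext fun _ _ => rfl

lemma NCmap_comp (g : B →ₗ[R] C) (f : A →ₗ[R] B) :
    NCmap R N (g ∘ₗ f) = NCmap R N g ∘ₗ NCmap R N f :=
  NCTensor.hom_ext fun _ _ => rfl

lemma NCmap_zero : NCmap R N (0 : A →ₗ[R] B) = 0 :=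
  NCTensor.hom_ext fun n _ => NCTensor.mk_zero_right n

lemma NCmap_add (f g : A →ₗ[R] B) : NCmap R N (f + g) = NCmap R N f + NCmap R N g :=
  NCTensor.hom_ext fun n a => NCTensor.mk_add_right n (f a) (g a)

lemma NCmapL_comp (g : N' →ₗ[Rᵐᵒᵖ] N'') (f : N →ₗ[Rᵐᵒᵖ] N') :
    NCmapL R A (g ∘ₗ f) = NCmapL R A g ∘ₗ NCmapL R A f :=
  NCTensor.hom_ext fun _ _ => rfl

lemma NCmapL_zero : NCmapL R A (0 : N →ₗ[Rᵐᵒᵖ] N') = 0 :=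
  NCTensor.hom_ext fun _ a => NCTensor.mk_zero_left a

lemma NCmap_NCmapL (f : A →ₗ[R] B) (g : N →ₗ[Rᵐᵒᵖ] N') (x : NCTensor R N A) :
    NCmap R N' f (NCmapL R A g x) = NCmapL R B g (NCmap R N f x) :=
  DFunLike.congr_fun (NCTensor.hom_ext (f := NCmap R N' f ∘ₗ NCmapL R A g)
    (g := NCmapL R B g ∘ₗ NCmap R N f) fun _ _ => rfl) x

lemma NCmap_comp_eq_zero {f : A →ₗ[R] B} {g : B →ₗ[R] C} (h : g ∘ₗ f = 0) (x : NCTensor R N A) :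
    NCmap R N g (NCmap R N f x) = 0 := by
  rw [← LinearMap.comp_apply, ← NCmap_comp, h, NCmap_zero, LinearMap.zero_apply]

lemma NCmapL_comp_eq_zero {f : N →ₗ[Rᵐᵒᵖ] N'} {g : N' →ₗ[Rᵐᵒᵖ] N''} (h : g ∘ₗ f = 0)
    (x : NCTensor R N A) : NCmapL R A g (NCmapL R A f x) = 0 := by
  rw [← LinearMap.comp_apply, ← NCmapL_comp, h, NCmapL_zero, LinearMap.zero_apply]

lemma NCmap_inl_fst_add_inr_snd (x : NCTensor R N (A × B)) :
    NCmap R N (LinearMap.inl R A B) (NCmap R N (LinearMap.fst R A B) x) +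
      NCmap R N (LinearMap.inr R A B) (NCmap R N (LinearMap.snd R A B) x) = x := by
  have hid : LinearMap.inl R A B ∘ₗ LinearMap.fst R A B + LinearMap.inr R A B ∘ₗ
      LinearMap.snd R A B = LinearMap.id := by
    ext <;> simp
  rw [← LinearMap.comp_apply, ← LinearMap.comp_apply (NCmap R N _), ← NCmap_comp, ← NCmap_comp,
    ← LinearMap.add_apply, ← NCmap_add, hid, NCmap_id, LinearMap.id_apply]

lemma NCmap_injective_of_equiv (e : A ≃ₗ[R] B) : Function.Injective (NCmap R N e.toLinearMap) :=
  Function.LeftInverse.injective (g := NCmap R N e.symm.toLinearMap) fun x => by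
    rw [← LinearMap.comp_apply, ← NCmap_comp, LinearEquiv.symm_comp, NCmap_id, LinearMap.id_apply]

lemma NCmap_injective_of_comp (g : B →ₗ[R] C) (f : A →ₗ[R] B)
    (h : Function.Injective (NCmap R N (g ∘ₗ f))) : Function.Injective (NCmap R N f) := by
  rw [NCmap_comp, LinearMap.coe_comp] at h
  exact h.of_comp

lemma NCmap_surjective {f : A →ₗ[R] B} (hf : Function.Surjective f) :
    Function.Surjective (NCmap R N f) := by
  intro x
  obtain ⟨y, rfl⟩ := Submodule.Quotient.mk_surjective _ x
  obtain ⟨y', rfl⟩ := LinearMap.lTensor_surjective N (g := f.restrictScalars ℤ) hf y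
  exact ⟨Submodule.Quotient.mk y', rfl⟩

lemma NCmapL_surjective {g : N →ₗ[Rᵐᵒᵖ] N'} (hg : Function.Surjective g) :
    Function.Surjective (NCmapL R A g) := by
  intro x
  obtain ⟨y, rfl⟩ := Submodule.Quotient.mk_surjective _ x
  obtain ⟨y', rfl⟩ := LinearMap.rTensor_surjective A (g := g.toAddMonoidHom.toIntLinearMap) hg y
  exact ⟨Submodule.Quotient.mk y', rfl⟩

end Functoriality

section RightExact

variable {R : Type u} [Ring R]
  {N N' N'' : Type u} [AddCommGroup N] [Module Rᵐᵒᵖ N] [AddCommGroup N'] [Module Rᵐᵒᵖ N']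
  [AddCommGroup N''] [Module Rᵐᵒᵖ N'']
  {A B C : Type u} [AddCommGroup A] [Module R A] [AddCommGroup B] [Module R B]
  [AddCommGroup C] [Module R C]

lemma NCRel_le_map_lTensor {g : B →ₗ[R] C} (hg : Function.Surjective g) :
    NCRel R N C ≤ (NCRel R N B).map (LinearMap.lTensor N (g.restrictScalars ℤ)) := by
  refine Submodule.span_le.mpr ?_
  rintro t ⟨n, r, c, rfl⟩
  obtain ⟨b, rfl⟩ := hg c
  exact ⟨_, Submodule.subset_span ⟨n, r, b, rfl⟩, by simp⟩

lemma NCRel_le_map_rTensor {g : N' →ₗ[Rᵐᵒᵖ] N''} (hg : Function.Surjective g) :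
    NCRel R N'' A ≤ (NCRel R N' A).map (LinearMap.rTensor A g.toAddMonoidHom.toIntLinearMap) := by
  refine Submodule.span_le.mpr ?_
  rintro t ⟨n, r, a, rfl⟩
  obtain ⟨n, rfl⟩ := hg n
  exact ⟨_, Submodule.subset_span ⟨n, r, a, rfl⟩, by simp⟩

lemma NCmap_exact {f : A →ₗ[R] B} {g : B →ₗ[R] C} (hfg : Function.Exact f g)
    (hg : Function.Surjective g) : Function.Exact (NCmap R N f) (NCmap R N g) :=
  ((lTensor_exact N (f := f.restrictScalars ℤ) (g := g.restrictScalars ℤ) hfg hg).exact_mapQ_iff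
    _ _).mpr (inf_le_right.trans (NCRel_le_map_lTensor hg))

lemma NCmapL_exact {f : N →ₗ[Rᵐᵒᵖ] N'} {g : N' →ₗ[Rᵐᵒᵖ] N''} (hfg : Function.Exact f g)
    (hg : Function.Surjective g) : Function.Exact (NCmapL R A f) (NCmapL R A g) :=
  ((rTensor_exact A (f := f.toAddMonoidHom.toIntLinearMap)
    (g := g.toAddMonoidHom.toIntLinearMap) hfg hg).exact_mapQ_iff _ _).mpr
    (inf_le_right.trans (NCRel_le_map_rTensor hg))

lemma NCmap_exact_comp {K K' : Type u} [AddCommGroup K] [Module R K] [AddCommGroup K']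
    [Module R K'] {a : K' →ₗ[R] B} {b : B →ₗ[R] K} (hab : Function.Exact a b)
    (hb : Function.Surjective b) {f : A →ₗ[R] K'} (hf : Function.Surjective f)
    {c : K →ₗ[R] C} (hc : Function.Injective (NCmap R N c)) :
    Function.Exact (NCmap R N (a ∘ₗ f)) (NCmap R N (c ∘ₗ b)) := by
  rw [NCmap_comp, NCmap_comp, (NCmap_surjective hf).comp_exact_iff_exact,
    hc.comp_exact_iff_exact]
  exact NCmap_exact hab hb

end RightExact

section Free

open MulOpposite NCTensor

namespace NCTensor

variable (R : Type u) [Ring R] (S : Type u)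

noncomputable def finsuppLeftHom (A : Type u) [AddCommGroup A] [Module R A] :
    NCTensor R (S →₀ Rᵐᵒᵖ) A →ₗ[ℤ] (S →₀ A) :=
  lift (AddMonoidHom.mk' (fun n => AddMonoidHom.mk'
      (fun a => n.mapRange (fun r => r.unop • a) (zero_smul R a)) fun _ _ => by ext; simp)
      fun _ _ => by ext; simp [add_smul])
    fun _ _ _ => by ext; simp [mul_smul]

noncomputable def finsuppLeftHomInv (A : Type u) [AddCommGroup A] [Module R A] :
    (S →₀ A) →ₗ[ℤ] NCTensor R (S →₀ Rᵐᵒᵖ) A :=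
  Finsupp.lsum ℤ fun s =>
    (AddMonoidHom.mk' (mk R (Finsupp.single s 1)) (mk_add_right _)).toIntLinearMap

lemma finsuppLeftHomInv_finsuppLeftHom (A : Type u) [AddCommGroup A] [Module R A] :
    finsuppLeftHomInv R S A ∘ₗ finsuppLeftHom R S A = LinearMap.id := by
  refine hom_ext fun n a => ?_
  induction n using Finsupp.induction_linear with
  | zero => simp [mk_zero_left]
  | add n n' hn hn' => simp_all [mk_add_left]
  | single s r =>
    simp only [LinearMap.comp_apply, finsuppLeftHom, lift_mk, finsuppLeftHomInv,
      LinearMap.id_apply, AddMonoidHom.mk'_apply, Finsupp.mapRange_single, Finsupp.lsum_single,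
      AddMonoidHom.coe_toIntLinearMap]
    rw [← mk_smul, op_unop, Finsupp.smul_single, smul_eq_mul, mul_one]

noncomputable def finsuppRightHom (N : Type u) [AddCommGroup N] [Module Rᵐᵒᵖ N] :
    NCTensor R N (S →₀ R) →ₗ[ℤ] (S →₀ N) :=
  lift (AddMonoidHom.mk' (fun n => AddMonoidHom.mk'
      (fun m => m.mapRange (fun r => op r • n) (by simp)) fun _ _ => by ext; simp [add_smul])
      fun _ _ => by ext; simp)
    fun _ _ _ => by ext; simp [mul_smul]

noncomputable def finsuppRightHomInv (N : Type u) [AddCommGroup N] [Module Rᵐᵒᵖ N] :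
    (S →₀ N) →ₗ[ℤ] NCTensor R N (S →₀ R) :=
  Finsupp.lsum ℤ fun s =>
    (AddMonoidHom.mk' (fun n => mk R n (Finsupp.single s 1))
      fun _ _ => mk_add_left _ _ _).toIntLinearMap

lemma finsuppRightHomInv_finsuppRightHom (N : Type u) [AddCommGroup N] [Module Rᵐᵒᵖ N] :
    finsuppRightHomInv R S N ∘ₗ finsuppRightHom R S N = LinearMap.id := by
  refine hom_ext fun n m => ?_
  induction m using Finsupp.induction_linear with
  | zero => simp [mk_zero_right]
  | add m m' hm hm' => simp_all [mk_add_right]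
  | single s r =>
    simp only [LinearMap.comp_apply, finsuppRightHom, lift_mk, finsuppRightHomInv,
      LinearMap.id_apply, AddMonoidHom.mk'_apply, Finsupp.mapRange_single, Finsupp.lsum_single,
      AddMonoidHom.coe_toIntLinearMap]
    rw [mk_smul, Finsupp.smul_single, smul_eq_mul, mul_one]

end NCTensor

lemma NCmap_injective_of_free {R : Type u} [Ring R] (S : Type u) {A B : Type u}
    [AddCommGroup A] [Module R A] [AddCommGroup B] [Module R B] {f : A →ₗ[R] B}
    (hf : Function.Injective f) :
    Function.Injective (NCmap R (S →₀ Rᵐᵒᵖ) f) := by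
  have hnat : finsuppLeftHom R S B ∘ₗ NCmap R (S →₀ Rᵐᵒᵖ) f =
      Finsupp.mapRange.linearMap (f.restrictScalars ℤ) ∘ₗ finsuppLeftHom R S A :=
    hom_ext fun n a => by ext; simp [finsuppLeftHom]
  have hinj : Function.Injective (finsuppLeftHom R S A) :=
    Function.LeftInverse.injective (g := finsuppLeftHomInv R S A)
      (DFunLike.congr_fun (finsuppLeftHomInv_finsuppLeftHom R S A))
  refine Function.Injective.of_comp (f := finsuppLeftHom R S B) ?_
  rw [← LinearMap.coe_comp, hnat, LinearMap.coe_comp]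
  exact (Finsupp.mapRange_injective _ (map_zero f) hf).comp hinj

lemma FlatModule.finsupp (R : Type u) [Ring R] (S : Type u) : FlatModule R (S →₀ R) := by
  intro N N' _ _ _ _ g hg
  have hnat : finsuppRightHom R S N' ∘ₗ NCmapL R (S →₀ R) g =
      Finsupp.mapRange.linearMap g.toAddMonoidHom.toIntLinearMap ∘ₗ finsuppRightHom R S N :=
    hom_ext fun n m => by ext; simp [finsuppRightHom]
  have hinj : Function.Injective (finsuppRightHom R S N) :=
    Function.LeftInverse.injective (g := finsuppRightHomInv R S N)
      (DFunLike.congr_fun (finsuppRightHomInv_finsuppRightHom R S N))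
  refine Function.Injective.of_comp (f := finsuppRightHom R S N') ?_
  rw [← LinearMap.coe_comp, hnat, LinearMap.coe_comp]
  exact (Finsupp.mapRange_injective _ (map_zero g) hg).comp hinj

end Free

section Flat

variable {R : Type u} [Ring R]
  {A B C : Type u} [AddCommGroup A] [Module R A] [AddCommGroup B] [Module R B]
  [AddCommGroup C] [Module R C]

lemma FlatModule.NCmap_eq_of_NCmapL_eq (hA : FlatModule R A) (f : B →ₗ[R] A)
    {N N' : Type u} [AddCommGroup N] [Module Rᵐᵒᵖ N] [AddCommGroup N'] [Module Rᵐᵒᵖ N']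
    {g : N →ₗ[Rᵐᵒᵖ] N'} (hg : Function.Injective g) {x y : NCTensor R N B}
    (h : NCmapL R B g x = NCmapL R B g y) : NCmap R N f x = NCmap R N f y :=
  hA N N' g hg (by rw [← NCmap_NCmapL, ← NCmap_NCmapL, h])

lemma FlatModule.of_retract (hB : FlatModule R B) (s : A →ₗ[R] B) (t : B →ₗ[R] A)
    (hts : t ∘ₗ s = LinearMap.id) : FlatModule R A := by
  intro N N' _ _ _ _ g hg x y h
  have hx : ∀ x : NCTensor R N A, NCmap R N t (NCmap R N s x) = x := fun x => by
    rw [← LinearMap.comp_apply, ← NCmap_comp, hts, NCmap_id, LinearMap.id_apply]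
  rw [← hx x, ← hx y, hB.NCmap_eq_of_NCmapL_eq s hg h]

lemma FlatModule.of_projective [Module.Projective R A] : FlatModule R A := by
  obtain ⟨s, hs⟩ := Module.projective_def.mp ‹Module.Projective R A›
  exact (FlatModule.finsupp R A).of_retract s (Finsupp.linearCombination R id) (LinearMap.ext hs)

lemma FlatModule.prod (hA : FlatModule R A) (hB : FlatModule R B) : FlatModule R (A × B) := by
  intro N N' _ _ _ _ g hg x y h
  rw [← NCmap_inl_fst_add_inr_snd x, ← NCmap_inl_fst_add_inr_snd y,
    hA.NCmap_eq_of_NCmapL_eq _ hg h, hB.NCmap_eq_of_NCmapL_eq _ hg h]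

/-- Present `I` as a quotient `F/J` of a free right module and chase the diagram of
`{J, F, I} ⊗ {A, B, C}`: exactness of its rows and columns, injectivity of `F ⊗ f` and of
`J ⊗ C → F ⊗ C` give injectivity of `I ⊗ f`. -/
theorem NCmap_injective_of_flat_cokernel {f : A →ₗ[R] B} {g : B →ₗ[R] C}
    (hf : Function.Injective f) (hfg : Function.Exact f g) (hg : Function.Surjective g)
    (hC : FlatModule R C) (I : Type u) [AddCommGroup I] [Module Rᵐᵒᵖ I] :
    Function.Injective (NCmap R I f) := by
  have hπ := Finsupp.linearCombination_id_surjective Rᵐᵒᵖ I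
  have hexact := NCmapL_exact (A := B) (LinearMap.exact_subtype_ker_map _) hπ
  rw [injective_iff_map_eq_zero]
  intro x hx
  obtain ⟨x, rfl⟩ := NCmapL_surjective (A := A) hπ x
  rw [NCmap_NCmapL] at hx
  obtain ⟨z, hz⟩ := (hexact _).mp hx
  have hgz : NCmap R _ g z = 0 := hC _ _ _ (Submodule.injective_subtype _) <| by
    rw [← NCmap_NCmapL, hz, NCmap_comp_eq_zero hfg.linearMap_comp_eq_zero, map_zero]
  obtain ⟨w, rfl⟩ := (NCmap_exact hfg hg _).mp hgz
  obtain rfl : x = NCmapL R A (LinearMap.ker _).subtype w :=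
    NCmap_injective_of_free I hf (by rw [NCmap_NCmapL, hz])
  exact NCmapL_comp_eq_zero (LinearMap.comp_ker_subtype _) w

lemma FlatModule.of_exact {f : A →ₗ[R] B} {g : B →ₗ[R] C} (hf : Function.Injective f)
    (hfg : Function.Exact f g) (hg : Function.Surjective g) (hB : FlatModule R B)
    (hC : FlatModule R C) : FlatModule R A := by
  intro N N' _ _ _ _ q hq x y h
  exact NCmap_injective_of_flat_cokernel hf hfg hg hC N (hB.NCmap_eq_of_NCmapL_eq f hq h)

end Flat

lemma LinearMap.exists_comp_eq_of_exact {R : Type u} [Ring R] {A B C D : Type u}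
    [AddCommGroup A] [Module R A] [AddCommGroup B] [Module R B] [AddCommGroup C] [Module R C]
    [AddCommGroup D] [Module R D] {f : A →ₗ[R] B} {g : B →ₗ[R] C} (hfg : Function.Exact f g)
    (hf : Function.Injective f) (h : D →ₗ[R] B) (hgh : g ∘ₗ h = 0) :
    ∃ h' : D →ₗ[R] A, f ∘ₗ h' = h :=
  ⟨(LinearEquiv.ofInjective f hf).symm ∘ₗ
    h.codRestrict (LinearMap.range f) fun x => (hfg _).mp (DFunLike.congr_fun hgh x),
    by ext x; simp; rfl⟩

section Adapted

variable {R : Type u} [Ring R] (I : Type u) [AddCommGroup I] [Module Rᵐᵒᵖ I]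

structure IsAdaptedPresentation {C G X : Type u} [AddCommGroup C] [Module R C] [AddCommGroup G]
    [Module R G] [AddCommGroup X] [Module R X] (i : C →ₗ[R] G) (ε : G →ₗ[R] X) : Prop where
  flat : FlatModule R G
  injective : Function.Injective i
  surjective : Function.Surjective ε
  exact : Function.Exact i ε
  tensor_injective : Function.Injective (NCmap R I i)

variable {I} {C G H K P X Z : Type u} [AddCommGroup C] [Module R C] [AddCommGroup G] [Module R G]
  [AddCommGroup H] [Module R H] [AddCommGroup K] [Module R K] [AddCommGroup P] [Module R P]
  [AddCommGroup X] [Module R X] [AddCommGroup Z] [Module R Z]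

variable (P) in
lemma IsAdaptedPresentation.prod {i : C →ₗ[R] G} {ε : G →ₗ[R] X}
    (h : IsAdaptedPresentation I i ε) [Module.Projective R P] :
    IsAdaptedPresentation I (LinearMap.inl R G P ∘ₗ i) (ε.prodMap (LinearMap.id : P →ₗ[R] P)) where
  flat := h.flat.prod FlatModule.of_projective
  injective := LinearMap.inl_injective.comp h.injective
  surjective := fun ⟨x, p⟩ => let ⟨g, hg⟩ := h.surjective x; ⟨(g, p), by simp [hg]⟩
  exact := by
    rintro ⟨g, p⟩
    simp only [LinearMap.prodMap_apply, LinearMap.id_apply, Prod.mk_eq_zero, h.exact g]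
    constructor
    · rintro ⟨⟨c, rfl⟩, rfl⟩
      exact ⟨c, rfl⟩
    · rintro ⟨c, hc⟩
      obtain ⟨rfl, rfl⟩ := Prod.ext_iff.mp hc
      exact ⟨⟨c, rfl⟩, rfl⟩
  tensor_injective := NCmap_injective_of_comp (LinearMap.fst R G P) _ h.tensor_injective

lemma IsAdaptedPresentation.exists_of_flat_cokernel {j : C →ₗ[R] H} {ρ : H →ₗ[R] Z}
    (h : IsAdaptedPresentation I j ρ) {ψ : K →ₗ[R] Z} {φ : Z →ₗ[R] G}
    (hψ : Function.Injective ψ) (hψφ : Function.Exact ψ φ) (hφ : Function.Surjective φ)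
    (hG : FlatModule R G) :
    ∃ (B : ModuleCat.{u} R) (j' : C →ₗ[R] B) (ρ' : B →ₗ[R] K), IsAdaptedPresentation I j' ρ' := by
  let B := LinearMap.ker (φ ∘ₗ ρ)
  have hjB : ∀ c, j c ∈ B := fun c => by simp [B, h.exact.apply_apply_eq_zero]
  obtain ⟨ρ', hρ'⟩ := LinearMap.exists_comp_eq_of_exact hψφ hψ (ρ ∘ₗ B.subtype)
    (LinearMap.ext fun b => b.2)
  have hρ'_apply (b : B) : ψ (ρ' b) = ρ b := DFunLike.congr_fun hρ' b
  refine ⟨.of R B, j.codRestrict B hjB, ρ', ⟨?_, ?_, ?_, ?_, ?_⟩⟩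
  · exact FlatModule.of_exact B.injective_subtype (LinearMap.exact_subtype_ker_map _)
      (hφ.comp h.surjective) h.flat hG
  · exact fun a b hab => h.injective (congrArg Subtype.val hab)
  · intro x
    obtain ⟨y, hy⟩ := h.surjective (ψ x)
    have hyB : y ∈ B := by simp [B, hy, hψφ.apply_apply_eq_zero]
    exact ⟨⟨y, hyB⟩, hψ (by rw [hρ'_apply, hy])⟩
  · intro b
    rw [← map_eq_zero_iff ψ hψ, hρ'_apply, h.exact]
    exact ⟨fun ⟨c, hc⟩ => ⟨c, Subtype.ext hc⟩, fun ⟨c, hc⟩ => ⟨c, congrArg Subtype.val hc⟩⟩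
  · refine NCmap_injective_of_comp B.subtype _ ?_
    rw [LinearMap.subtype_comp_codRestrict]
    exact h.tensor_injective

lemma exists_exact_coprod {i : C →ₗ[R] G} {ε : G →ₗ[R] X} (hi : Function.Injective i)
    (hiε : Function.Exact i ε) {k : K →ₗ[R] P} {q : P →ₗ[R] X} (hk : Function.Injective k)
    (hq : Function.Surjective q) (hkq : Function.Exact k q) (σ : P →ₗ[R] G) (hσ : ε ∘ₗ σ = q) :
    ∃ ψ : K →ₗ[R] C × P, Function.Injective ψ ∧ Function.Exact ψ (i.coprod σ) ∧
      Function.Surjective (i.coprod σ) ∧ LinearMap.snd R C P ∘ₗ ψ = k := by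
  have hσ' (p : P) : ε (σ p) = q p := DFunLike.congr_fun hσ p
  obtain ⟨τ, hτ⟩ := LinearMap.exists_comp_eq_of_exact hiε hi (σ ∘ₗ k)
    (LinearMap.ext fun x => by simp [hσ', hkq.apply_apply_eq_zero])
  have hτ' (x : K) : i (τ x) = σ (k x) := DFunLike.congr_fun hτ x
  refine ⟨(-τ).prod k, fun x y hxy => hk (congrArg Prod.snd hxy), ?_, ?_, rfl⟩
  · rintro ⟨c, p⟩
    simp only [LinearMap.coprod_apply]
    constructor
    · intro h
      obtain ⟨x, rfl⟩ := (hkq p).mp <| by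
        rw [← hσ', ← neg_eq_of_add_eq_zero_right h, map_neg, hiε.apply_apply_eq_zero, neg_zero]
      refine ⟨x, Prod.ext (hi ?_) rfl⟩
      simp [hτ', neg_eq_of_add_eq_zero_left h]
    · rintro ⟨x, hx⟩
      obtain ⟨rfl, rfl⟩ := Prod.ext_iff.mp hx
      simp [hτ']
  · intro g
    obtain ⟨p, hp⟩ := hq (ε g)
    obtain ⟨c, hc⟩ := (hiε (g - σ p)).mp (by simp [hσ', hp])
    exact ⟨(c, p), by simp [hc]⟩

lemma NCmap_injective_of_exact_coprod {ψ : K →ₗ[R] C × P} {i : C →ₗ[R] G} {σ : P →ₗ[R] G}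
    (hψ : Function.Injective ψ) (hψφ : Function.Exact ψ (i.coprod σ))
    (hφ : Function.Surjective (i.coprod σ)) (hG : FlatModule R G)
    (hi : Function.Injective (NCmap R I i)) :
    Function.Injective (NCmap R I (LinearMap.snd R C P ∘ₗ ψ)) := by
  rw [injective_iff_map_eq_zero]
  intro u hu
  rw [NCmap_comp, LinearMap.comp_apply] at hu
  have hv := NCmap_inl_fst_add_inr_snd (NCmap R I ψ u)
  rw [hu, map_zero, add_zero] at hv
  have hfst : NCmap R I (LinearMap.fst R C P) (NCmap R I ψ u) = 0 := by
    refine (injective_iff_map_eq_zero _).mp hi _ ?_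
    rw [← LinearMap.coprod_inl i σ, NCmap_comp, LinearMap.comp_apply, hv,
      NCmap_comp_eq_zero hψφ.linearMap_comp_eq_zero]
  rw [hfst, map_zero] at hv
  exact (injective_iff_map_eq_zero _).mp (NCmap_injective_of_flat_cokernel hψ hψφ hφ hG I) u
    hv.symm

variable (R I) in
/-- A flat resolution `⋯ → G 1 → G 0 → X → 0` which stays exact under `I ⊗_R -`, recorded
through its short exact pieces `0 → C n → G n → C (n - 1) → 0`, where `C (-1) = X`. -/
structure AdaptedFlatResolution (X : Type u) [AddCommGroup X] [Module R X] : Type (u + 1) where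
  C : ℕ → ModuleCat.{u} R
  G : ℕ → ModuleCat.{u} R
  i : ∀ n, C n →ₗ[R] G n
  ε : G 0 →ₗ[R] X
  p : ∀ n, G (n + 1) →ₗ[R] C n
  isAdapted_zero : IsAdaptedPresentation I (i 0) ε
  isAdapted_succ : ∀ n, IsAdaptedPresentation I (i (n + 1)) (p n)

namespace AdaptedFlatResolution

def tail (A : AdaptedFlatResolution R I X) : AdaptedFlatResolution R I (A.C 0) where
  C n := A.C (n + 1)
  G n := A.G (n + 1)
  i n := A.i (n + 1)
  ε := A.p 0
  p n := A.p (n + 1)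
  isAdapted_zero := A.isAdapted_succ 0
  isAdapted_succ n := A.isAdapted_succ (n + 1)

def cons {i : C →ₗ[R] G} {ε : G →ₗ[R] X} (h : IsAdaptedPresentation I i ε)
    (A : AdaptedFlatResolution R I C) : AdaptedFlatResolution R I X where
  C | 0 => .of R C | n + 1 => A.C n
  G | 0 => .of R G | n + 1 => A.G n
  i | 0 => i | n + 1 => A.i n
  ε := ε
  p | 0 => A.ε | n + 1 => A.p n
  isAdapted_zero := h
  isAdapted_succ | 0 => A.isAdapted_zero | n + 1 => A.isAdapted_succ n

theorem dimension_shift (A : AdaptedFlatResolution R I X) {k : K →ₗ[R] P} {q : P →ₗ[R] X}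
    [Module.Projective R P] (hk : Function.Injective k) (hq : Function.Surjective q)
    (hkq : Function.Exact k q) :
    Function.Injective (NCmap R I k) ∧ Nonempty (AdaptedFlatResolution R I K) := by
  have h₀ := A.isAdapted_zero
  obtain ⟨σ, hσ⟩ := Module.projective_lifting_property A.ε q h₀.surjective
  obtain ⟨ψ, hψ, hψφ, hφ, rfl⟩ := exists_exact_coprod h₀.injective h₀.exact hk hq hkq σ hσ
  refine ⟨NCmap_injective_of_exact_coprod hψ hψφ hφ h₀.flat h₀.tensor_injective, ?_⟩
  obtain ⟨B, j, ρ, hB⟩ :=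
    ((A.isAdapted_succ 0).prod P).exists_of_flat_cokernel hψ hψφ hφ h₀.flat
  exact ⟨A.tail.tail.cons hB⟩

theorem exact_NCmap (A : AdaptedFlatResolution R I X) (P : ℕ → ModuleCat.{u} R)
    (d : ∀ n, P (n + 1) →ₗ[R] P n) (ε : P 0 →ₗ[R] X) (hP : ∀ n, Module.Projective R (P n))
    (hε : Function.Surjective ε) (hd₀ : Function.Exact (d 0) ε)
    (hd : ∀ n, Function.Exact (d (n + 1)) (d n)) (n : ℕ) :
    Function.Exact (NCmap R I (d (n + 1))) (NCmap R I (d n)) := by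
  have hsyz : ∀ n, Function.Injective (NCmap R I (LinearMap.range (d n)).subtype) ∧
      Nonempty (AdaptedFlatResolution R I (LinearMap.range (d n))) := by
    intro n
    induction n with
    | zero =>
      exact A.dimension_shift (P := P 0) (Submodule.injective_subtype _) hε
        ((LinearMap.surjective_rangeRestrict _).comp_exact_iff_exact.mp hd₀)
    | succ n ih =>
      obtain ⟨-, ⟨B⟩⟩ := ih
      exact B.dimension_shift (P := P (n + 1)) (Submodule.injective_subtype _)
        (LinearMap.surjective_rangeRestrict _) (hd n).linearMap_rangeRestrict
  have hfac (m : ℕ) : (LinearMap.range (d m)).subtype ∘ₗ (d m).rangeRestrict = d m := rfl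
  rw [← hfac (n + 1), ← hfac n]
  exact NCmap_exact_comp (hd n).linearMap_rangeRestrict (LinearMap.surjective_rangeRestrict _)
    (LinearMap.surjective_rangeRestrict _) (hsyz n).1

end AdaptedFlatResolution

end Adapted

section GorensteinFlat

variable {R : Type u} [Ring R] {I : Type u} [AddCommGroup I] [Module Rᵐᵒᵖ I]

lemma NCmap_injective_range_subtype {A B C : Type u} [AddCommGroup A] [Module R A]
    [AddCommGroup B] [Module R B] [AddCommGroup C] [Module R C] {f : A →ₗ[R] B}
    {g : B →ₗ[R] C} (hgf : g ∘ₗ f = 0) (h : Function.Exact (NCmap R I f) (NCmap R I g)) :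
    Function.Injective (NCmap R I (LinearMap.range g).subtype) := by
  rw [injective_iff_map_eq_zero]
  intro u hu
  obtain ⟨u, rfl⟩ := NCmap_surjective g.surjective_rangeRestrict u
  rw [← LinearMap.comp_apply, ← NCmap_comp] at hu
  obtain ⟨w, rfl⟩ := (h u).mp hu
  exact NCmap_comp_eq_zero (LinearMap.ext fun x => Subtype.ext (DFunLike.congr_fun hgf x)) w

lemma IsAdaptedPresentation.postcomp {C G X Y : Type u} [AddCommGroup C] [Module R C]
    [AddCommGroup G] [Module R G] [AddCommGroup X] [Module R X] [AddCommGroup Y] [Module R Y]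
    {i : C →ₗ[R] G} {ε : G →ₗ[R] X} (h : IsAdaptedPresentation I i ε) (e : X ≃ₗ[R] Y) :
    IsAdaptedPresentation I i (e.toLinearMap ∘ₗ ε) where
  __ := h
  surjective := e.surjective.comp h.surjective
  exact := LinearEquiv.postcomp_exact_iff_exact.mpr h.exact

namespace CompleteFlatResolution

variable {M : Type u} [AddCommGroup M] [Module R M] (F : CompleteFlatResolution R M)

lemma tensor_injective_range (hI : Module.Injective Rᵐᵒᵖ I) (z : ℤ) :
    Function.Injective (NCmap R I (LinearMap.range (F.d z)).subtype) :=
  NCmap_injective_range_subtype (F.exact z).linearMap_comp_eq_zero (F.tensorExact I hI z)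

lemma isAdaptedPresentation (hI : Module.Injective Rᵐᵒᵖ I) (z : ℤ) :
    IsAdaptedPresentation I (LinearMap.range (F.d (z + 1))).subtype (F.d z).rangeRestrict where
  flat := F.flat _
  injective := Submodule.injective_subtype _
  surjective := LinearMap.surjective_rangeRestrict _
  exact := (F.exact z).linearMap_rangeRestrict
  tensor_injective := F.tensor_injective_range hI (z + 1)

noncomputable def adaptedFlatResolution (hI : Module.Injective Rᵐᵒᵖ I) :
    AdaptedFlatResolution R I M where
  C n := .of R (LinearMap.range (F.d n))
  G n := F.F n
  i n := (LinearMap.range (F.d n)).subtype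
  ε := F.iso.some.symm.toLinearMap ∘ₗ ((F.d (-1)).rangeRestrict : F.F 0 →ₗ[R] _)
  p n := (F.d n).rangeRestrict
  isAdapted_zero := (F.isAdaptedPresentation hI (-1)).postcomp F.iso.some.symm
  isAdapted_succ n := F.isAdaptedPresentation hI n

end CompleteFlatResolution

theorem CompleteFlatResolution.torVanishGT {M : ModuleCat.{u} R} (F : CompleteFlatResolution R M)
    (hI : Module.Injective Rᵐᵒᵖ I) : TorVanishGT R 0 I M :=
  fun P d ε hP hε hd₀ hd n _ => (F.adaptedFlatResolution hI).exact_NCmap P d ε hP hε hd₀ hd n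

theorem CompleteFlatResolution.exists_coresolution {M : ModuleCat.{u} R}
    (F : CompleteFlatResolution R M) :
    ∃ (G : ℕ → ModuleCat.{u} R) (d : ∀ i, G i →ₗ[R] G (i + 1)) (ι : ↥M →ₗ[R] G 0),
      (∀ i, FlatModule R ↥(G i)) ∧ Function.Injective ι ∧ Function.Exact ι (d 0) ∧
      (∀ i, Function.Exact (d i) (d (i + 1))) ∧
      (∀ (I : Type u) [AddCommGroup I] [Module Rᵐᵒᵖ I], Module.Injective Rᵐᵒᵖ I →
        Function.Injective (NCmap R I ι) ∧
        Function.Exact (NCmap R I ι) (NCmap R I (d 0)) ∧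
        ∀ i, Function.Exact (NCmap R I (d i)) (NCmap R I (d (i + 1)))) := by
  obtain ⟨e⟩ := F.iso
  have hd : (LinearMap.range (F.d (-1))).subtype ∘ₗ (F.d (-1)).rangeRestrict = F.d (-1) := rfl
  have hrr := LinearMap.surjective_rangeRestrict (F.d (-1))
  refine ⟨fun n => F.F (Int.negSucc n), fun n => F.d (Int.negSucc (n + 1)),
    (LinearMap.range (F.d (-1))).subtype ∘ₗ e.toLinearMap, fun n => F.flat (Int.negSucc n),
    (Submodule.injective_subtype _).comp e.injective, ?_, fun n => F.exact (Int.negSucc (n + 2)),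
    fun I _ _ hI => ⟨?_, ?_, fun n => F.tensorExact I hI (Int.negSucc (n + 2))⟩⟩
  · rw [e.surjective.comp_exact_iff_exact, ← hrr.comp_exact_iff_exact, hd]
    exact F.exact (Int.negSucc 1)
  · rw [NCmap_comp, LinearMap.coe_comp]
    exact (F.tensor_injective_range hI (-1)).comp (NCmap_injective_of_equiv e)
  · rw [NCmap_comp, (NCmap_surjective e.surjective).comp_exact_iff_exact,
      ← (NCmap_surjective hrr).comp_exact_iff_exact, ← NCmap_comp, hd]
    exact F.tensorExact I hI (Int.negSucc 1)

namespace FreeResolution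

variable (M : ModuleCat.{u} R)

noncomputable def syzygy : ℕ → ModuleCat.{u} R
  | 0 => M
  | n + 1 => .of R (LinearMap.ker (Finsupp.linearCombination R (id : syzygy n → syzygy n)))

noncomputable def P (n : ℕ) : ModuleCat.{u} R := .of R (syzygy M n →₀ R)

noncomputable def ε (n : ℕ) : P M n →ₗ[R] syzygy M n := Finsupp.linearCombination R id

noncomputable def d (n : ℕ) : P M (n + 1) →ₗ[R] P M n :=
  (LinearMap.ker (ε M n)).subtype ∘ₗ ε M (n + 1)

instance (n : ℕ) : Module.Projective R (P M n) :=
  inferInstanceAs (Module.Projective R (syzygy M n →₀ R))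

lemma ε_surjective (n : ℕ) : Function.Surjective (ε M n) :=
  Finsupp.linearCombination_id_surjective R _

lemma exact_d_ε (n : ℕ) : Function.Exact (d M n) (ε M n) :=
  (ε_surjective M (n + 1)).comp_exact_iff_exact.mpr (LinearMap.exact_subtype_ker_map _)

lemma exact_d (n : ℕ) : Function.Exact (d M (n + 1)) (d M n) :=
  (Submodule.injective_subtype _).comp_exact_iff_exact.mpr (exact_d_ε M (n + 1))

end FreeResolution

noncomputable def CompleteFlatResolution.splice (M : ModuleCat.{u} R)
    (hTor : ∀ (I : Type u) [AddCommGroup I] [Module Rᵐᵒᵖ I], Module.Injective Rᵐᵒᵖ I →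
      TorVanishGT R 0 I M)
    (G : ℕ → ModuleCat.{u} R) (dG : ∀ i, G i →ₗ[R] G (i + 1)) (ι : ↥M →ₗ[R] G 0)
    (hG : ∀ i, FlatModule R ↥(G i)) (hι : Function.Injective ι)
    (hιd : Function.Exact ι (dG 0)) (hdG : ∀ i, Function.Exact (dG i) (dG (i + 1)))
    (hGI : ∀ (I : Type u) [AddCommGroup I] [Module Rᵐᵒᵖ I], Module.Injective Rᵐᵒᵖ I →
      Function.Injective (NCmap R I ι) ∧
      Function.Exact (NCmap R I ι) (NCmap R I (dG 0)) ∧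
      ∀ i, Function.Exact (NCmap R I (dG i)) (NCmap R I (dG (i + 1)))) :
    CompleteFlatResolution R M where
  F z := match z with
    | .ofNat n => FreeResolution.P M n
    | .negSucc n => G n
  d z := match z with
    | .ofNat n => FreeResolution.d M n
    | .negSucc 0 => ι ∘ₗ FreeResolution.ε M 0
    | .negSucc (n + 1) => dG n
  flat z := match z with
    | .ofNat _ => FlatModule.of_projective
    | .negSucc n => hG n
  exact z := match z with
    | .ofNat n => FreeResolution.exact_d M n
    | .negSucc 0 => hι.comp_exact_iff_exact.mpr (FreeResolution.exact_d_ε M 0)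
    | .negSucc 1 => (FreeResolution.ε_surjective M 0).comp_exact_iff_exact.mpr hιd
    | .negSucc (n + 2) => hdG n
  iso := ⟨(LinearEquiv.ofInjective ι hι).trans (LinearEquiv.ofEq _ _
    (LinearMap.range_comp_of_range_eq_top ι
      (LinearMap.range_eq_top.2 (FreeResolution.ε_surjective M 0))).symm)⟩
  tensorExact I _ _ hI z := match z with
    | .ofNat n => hTor I hI _ _ _ inferInstance (FreeResolution.ε_surjective M 0)
        (FreeResolution.exact_d_ε M 0) (FreeResolution.exact_d M) n n.zero_le
    | .negSucc 0 => by
      show Function.Exact (NCmap R I (FreeResolution.d M 0))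
        (NCmap R I (ι ∘ₗ FreeResolution.ε M 0))
      rw [NCmap_comp ι (FreeResolution.ε M 0)]
      exact (hGI I hI).1.comp_exact_iff_exact.mpr
        (NCmap_exact (FreeResolution.exact_d_ε M 0) (FreeResolution.ε_surjective M 0))
    | .negSucc 1 => by
      show Function.Exact (NCmap R I (ι ∘ₗ FreeResolution.ε M 0)) (NCmap R I (dG 0))
      rw [NCmap_comp ι (FreeResolution.ε M 0)]
      exact (NCmap_surjective (FreeResolution.ε_surjective M 0)).comp_exact_iff_exact.mpr
        (hGI I hI).2.1
    | .negSucc (n + 2) => (hGI I hI).2.2 n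

end GorensteinFlat

/-- A left `R`-module `M` is Gorenstein flat iff (1) `Tor_i^R(I, M) = 0` for every
injective right `R`-module `I` and all `i > 0`, and (2) there is an exact sequence
`0 → M → F₀ → F₁ → ⋯` with each `Fᵢ` flat that stays exact after applying `I ⊗_R -`
for every injective right `R`-module `I`. -/
theorem stmt12 (R : Type u) [Ring R] (M : ModuleCat.{u} R) :
    IsGorensteinFlat R ↥M ↔
      ((∀ (I : Type u) [AddCommGroup I] [Module Rᵐᵒᵖ I], Module.Injective Rᵐᵒᵖ I →
          TorVanishGT R 0 I M) ∧
       (∃ (F : ℕ → ModuleCat.{u} R) (d : ∀ i, F i →ₗ[R] F (i + 1)) (ι : ↥M →ₗ[R] F 0),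
          (∀ i, FlatModule R ↥(F i)) ∧ Function.Injective ι ∧ Function.Exact ι (d 0) ∧
          (∀ i, Function.Exact (d i) (d (i + 1))) ∧
          (∀ (I : Type u) [AddCommGroup I] [Module Rᵐᵒᵖ I], Module.Injective Rᵐᵒᵖ I →
            Function.Injective (NCmap R I ι) ∧
            Function.Exact (NCmap R I ι) (NCmap R I (d 0)) ∧
            ∀ i, Function.Exact (NCmap R I (d i)) (NCmap R I (d (i + 1)))))) := by
  constructor
  · rintro ⟨F⟩
    exact ⟨fun I _ _ hI => F.torVanishGT hI, F.exists_coresolution⟩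
  · rintro ⟨hTor, G, dG, ι, hG, hι, hιd, hdG, hGI⟩
    exact ⟨.splice M hTor G dG ι hG hι hιd hdG hGI⟩
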